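/- arXiv:0807.3611 — 2 statements merged into one kernel-verified Lean document; each statement's English description precedes it below -/
import Mathlib

section
/- Let M be a cancellative commutative monoid, P a commutative monoid, and θ : P → M a monoid homomorphism. Write H = {p ∈ P : θ(p) is a unit of M}, let P̄ denote the quotient of P by the congruence p ∼ p′ ⟺ ∃ v, v′ ∈ H with p + v = p′ + v′, and let M̄ denote the quotient of M by the congruence m ∼ m′ ⟺ ∃ units a, a′ of M with m + a = m′ + a′. Then the following are equivalent: (i) the homomorphism P̄ → M̄ induced by θ is an isomorphism of monoids; (ii) the map Φ : P × Mˣ → M, Φ(p,u) = θ(p) + u, is surjective, and Φ(p,u) = Φ(p′,u′) holds if and only if there exist v, v′ ∈ H with p + v = p′ + v′ and u + θ(v′) = u′ + θ(v). -/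
/-- **Chart criterion at the level of stalks (Lemma 3.1(1)).**
Let `M` be a cancellative commutative (additive) monoid, `P` a commutative monoid,
`θ : P →+ M` a monoid homomorphism, and `H = {p | IsAddUnit (θ p)}`.  The induced map
between the quotients `P̄ → M̄` (quotient of `P` by `p ∼ p' ↔ ∃ v v' ∈ H, p + v = p' + v'`,
and of `M` by `m ∼ m' ↔ ∃ units a a', m + a = m' + a'`) is an isomorphism of monoids
— expressed elementarily as: it reflects the relation (injectivity) and hits every
class (surjectivity) — if and only if the map `Φ : P × Mˣ → M`, `Φ(p,u) = θ p + u`,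
is surjective and `Φ(p,u) = Φ(p',u')` holds iff there are `v v' ∈ H` with
`p + v = p' + v'` and `u + θ v' = u' + θ v`. -/
theorem stmt0 {M P : Type*} [AddCancelCommMonoid M] [AddCommMonoid P] (θ : P →+ M) :
    ((∀ p p' : P,
        (∃ a a' : AddUnits M, θ p + (a : M) = θ p' + (a' : M)) ↔
        (∃ v v' : P, IsAddUnit (θ v) ∧ IsAddUnit (θ v') ∧ p + v = p' + v')) ∧
      (∀ m : M, ∃ (p : P) (a a' : AddUnits M), θ p + (a : M) = m + (a' : M)))
    ↔
    (Function.Surjective (fun x : P × AddUnits M => θ x.1 + (x.2 : M)) ∧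
      ∀ (p p' : P) (u u' : AddUnits M),
        θ p + (u : M) = θ p' + (u' : M) ↔
          ∃ v v' : P, IsAddUnit (θ v) ∧ IsAddUnit (θ v') ∧ p + v = p' + v' ∧
            (u : M) + θ v' = (u' : M) + θ v) := by
  constructor
  · rintro ⟨hinj, hsurj⟩
    constructor
    · intro m
      obtain ⟨p, a, a', h⟩ := hsurj m
      refine ⟨⟨p, a + (-a')⟩, ?_⟩
      show θ p + ((a + (-a') : AddUnits M) : M) = m
      have key : θ p + ((a + (-a') : AddUnits M) : M) + (a' : M) = m + (a' : M) := by
        rw [← h]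
        push_cast
        have : ((-a' : AddUnits M) : M) + (a' : M) = 0 := AddUnits.neg_add a'
        calc θ p + ((a : M) + ((-a' : AddUnits M) : M)) + (a' : M)
            = θ p + (a : M) + (((-a' : AddUnits M) : M) + (a' : M)) := by abel
          _ = θ p + (a : M) := by rw [this, add_zero]
      exact add_right_cancel key
    · intro p p' u u'
      constructor
      · intro h
        obtain ⟨v, v', hv, hv', hpv⟩ := (hinj p p').mp ⟨u, u', h⟩
        refine ⟨v, v', hv, hv', hpv, ?_⟩
        have h1 : θ p + θ v = θ p' + θ v' := by rw [← map_add, ← map_add, hpv]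
        have key : θ p + ((u : M) + θ v') = θ p + ((u' : M) + θ v) := by
          calc θ p + ((u : M) + θ v') = θ p + (u : M) + θ v' := by abel
            _ = θ p' + (u' : M) + θ v' := by rw [h]
            _ = θ p' + θ v' + (u' : M) := by abel
            _ = θ p + θ v + (u' : M) := by rw [h1]
            _ = θ p + ((u' : M) + θ v) := by abel
        exact add_left_cancel key
      · rintro ⟨v, v', hv, hv', hpv, hu⟩
        have h1 : θ p + θ v = θ p' + θ v' := by rw [← map_add, ← map_add, hpv]
        have key : θ p + (u : M) + θ v = θ p' + (u' : M) + θ v := by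
          calc θ p + (u : M) + θ v = θ p + θ v + (u : M) := by abel
            _ = θ p' + θ v' + (u : M) := by rw [h1]
            _ = θ p' + ((u : M) + θ v') := by abel
            _ = θ p' + ((u' : M) + θ v) := by rw [hu]
            _ = θ p' + (u' : M) + θ v := by abel
        exact add_right_cancel key
  · rintro ⟨hsurj, hchar⟩
    refine ⟨fun p p' => ⟨?_, ?_⟩, fun m => ?_⟩
    · rintro ⟨a, a', h⟩
      obtain ⟨v, v', hv, hv', hpv, -⟩ := (hchar p p' a a').mp h
      exact ⟨v, v', hv, hv', hpv⟩
    · rintro ⟨v, v', hv, hv', hpv⟩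
      obtain ⟨b, hb⟩ := hv
      obtain ⟨b', hb'⟩ := hv'
      exact ⟨b, b', by rw [hb, hb', ← map_add, ← map_add, hpv]⟩
    · obtain ⟨⟨p, u⟩, hpu⟩ := hsurj m
      exact ⟨p, u, 0, by simpa using hpu⟩
end

section
/- Let A be a noetherian local ring with maximal ideal m_A that is complete with respect to its m_A-adic topology, let t ∈ m_A, and let R = A⟦X,Y⟧/(XY − t) be the quotient of the formal power series ring in two variables over A, with u, v the images of X, Y. Let l be a positive integer, and let a, b ∈ Rˣ be units such that a·u^l = u^l, b·v^l = v^l, and a·b is the image under the structure map A → R of a unit of A. Then a = b = 1. -/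
/-!
Because `A` is complete for an ideal containing `t`, the class in `R = A⟦X,Y⟧/(XY - t)` of a
series `F` has a unique normal form `∑ αᵢ uⁱ + ∑ βⱼ vʲ`, where `αᵢ = ∑ₖ tᵏ F_{i+k,k}` and
`βⱼ = ∑ₖ tᵏ F_{k,j+k}` (`α₀ = β₀`), and `F ∈ (XY - t)` iff all `αᵢ` and `βⱼ` vanish. As
`u · uⁱ = uⁱ⁺¹` and `u · vʲ = t vʲ⁻¹`, the relation `(a - 1) uˡ = 0` forces
`a - 1 = ∑ βⱼ vʲ` with `tʲ βⱼ = 0`, and likewise `b - 1 = ∑ γᵢ uⁱ` with `tⁱ γᵢ = 0`.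
Since `uⁱ vʲ = t^min(i,j) · (…)`, all products `βⱼ γᵢ uⁱ vʲ` vanish, so
`ab = 1 + ∑ βⱼ vʲ + ∑ γᵢ uⁱ`; as `ab` lies in the image of `A`, comparing coefficients of `vʲ`
gives `β = 0`, i.e. `a = 1`, and `b = 1` follows by the symmetry `X ↔ Y`.
-/

section AdicSum

open Finset

variable {A : Type*} [CommRing A] {𝔞 : Ideal A} {t : A} {f g : ℕ → A} {L M : A}

def HasAdicSum (𝔞 : Ideal A) (t : A) (f : ℕ → A) (L : A) : Prop :=
  ∀ n, ∑ k ∈ range n, t ^ k * f k - L ∈ 𝔞 ^ n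

theorem HasAdicSum.add (hf : HasAdicSum 𝔞 t f L) (hg : HasAdicSum 𝔞 t g M) :
    HasAdicSum 𝔞 t (f + g) (L + M) := fun n => by
  convert add_mem (hf n) (hg n) using 1
  simp only [Pi.add_apply, mul_add, sum_add_distrib]
  ring

theorem HasAdicSum.const_smul (c : A) (hf : HasAdicSum 𝔞 t f L) :
    HasAdicSum 𝔞 t (c • f) (c * L) := fun n => by
  convert Ideal.mul_mem_left _ c (hf n) using 1
  simp only [Pi.smul_apply, smul_eq_mul, mul_sub, mul_sum]
  congr 1
  exact sum_congr rfl fun k _ => by ring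

theorem hasAdicSum_zero_of_forall_pow_mul_eq_zero (hf : ∀ k, t ^ k * f k = 0) :
    HasAdicSum 𝔞 t f 0 := fun n => by
  simp [hf]

theorem HasAdicSum.zero_add_mul (ht : t ∈ 𝔞) (hf : HasAdicSum 𝔞 t (fun k => f (k + 1)) L) :
    HasAdicSum 𝔞 t f (f 0 + t * L) := by
  rintro (_ | n)
  · simp
  · have key : ∑ k ∈ range (n + 1), t ^ k * f k - (f 0 + t * L)
        = t * (∑ k ∈ range n, t ^ k * f (k + 1) - L) := by
      rw [sum_range_succ', mul_sub, mul_sum]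
      simp only [pow_succ', mul_assoc, pow_zero, one_mul]
      abel
    rw [key, pow_succ']
    exact Ideal.mul_mem_mul ht (hf n)

theorem smodEq_pow_smul_top_iff {x y : A} {n : ℕ} :
    x ≡ y [SMOD (𝔞 ^ n • ⊤ : Submodule A A)] ↔ x - y ∈ 𝔞 ^ n := by
  rw [SModEq.sub_mem, smul_eq_mul, Ideal.mul_top]

theorem HasAdicSum.unique [IsHausdorff 𝔞 A] (hL : HasAdicSum 𝔞 t f L)
    (hM : HasAdicSum 𝔞 t f M) : L = M :=
  IsHausdorff.eq_iff_smodEq.2 fun n => smodEq_pow_smul_top_iff.2 <| by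
    simpa using sub_mem (hM n) (hL n)

theorem exists_hasAdicSum [IsPrecomplete 𝔞 A] (ht : t ∈ 𝔞) (f : ℕ → A) :
    ∃ L, HasAdicSum 𝔞 t f L := by
  obtain ⟨L, hL⟩ := IsPrecomplete.prec' (I := 𝔞) (fun n => ∑ k ∈ range n, t ^ k * f k)
    fun {m n} hmn => smodEq_pow_smul_top_iff.2 <| by
      rw [← neg_sub, ← sum_Ico_eq_sub _ hmn]
      refine neg_mem (sum_mem fun k hk => Ideal.mul_mem_right _ _ ?_)
      exact Ideal.pow_le_pow_right (mem_Ico.1 hk).1 (Ideal.pow_mem_pow ht k)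
  exact ⟨L, fun n => smodEq_pow_smul_top_iff.1 (hL n)⟩

variable [IsAdicComplete 𝔞 A] (ht : t ∈ 𝔞)

noncomputable def adicSum : (ℕ → A) →ₗ[A] A where
  toFun f := (exists_hasAdicSum ht f).choose
  map_add' f g := ((exists_hasAdicSum ht (f + g)).choose_spec.unique
    ((exists_hasAdicSum ht f).choose_spec.add (exists_hasAdicSum ht g).choose_spec))
  map_smul' c f := ((exists_hasAdicSum ht (c • f)).choose_spec.unique
    ((exists_hasAdicSum ht f).choose_spec.const_smul c))

theorem hasAdicSum_adicSum (f : ℕ → A) : HasAdicSum 𝔞 t f (adicSum ht f) :=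
  (exists_hasAdicSum ht f).choose_spec

theorem HasAdicSum.adicSum_eq (hf : HasAdicSum 𝔞 t f L) : adicSum ht f = L :=
  (hasAdicSum_adicSum ht f).unique hf

theorem adicSum_eq_zero_of_forall_pow_mul_eq_zero (hf : ∀ k, t ^ k * f k = 0) :
    adicSum ht f = 0 :=
  (hasAdicSum_zero_of_forall_pow_mul_eq_zero hf).adicSum_eq ht

theorem adicSum_eq_zero_add_mul (f : ℕ → A) :
    adicSum ht f = f 0 + t * adicSum ht (fun k => f (k + 1)) :=
  ((hasAdicSum_adicSum ht _).zero_add_mul ht).adicSum_eq ht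

end AdicSum

noncomputable section XYQuotient

open MvPowerSeries

variable {A : Type*} [CommRing A]

def bideg (i j : ℕ) : Fin 2 →₀ ℕ := Finsupp.single 0 i + Finsupp.single 1 j

@[simp] theorem bideg_apply_zero (i j : ℕ) : bideg i j 0 = i := by simp [bideg]

@[simp] theorem bideg_apply_one (i j : ℕ) : bideg i j 1 = j := by simp [bideg]

theorem eq_bideg (d : Fin 2 →₀ ℕ) : d = bideg (d 0) (d 1) := by
  ext x; fin_cases x <;> simp

theorem bideg_add (i j i' j' : ℕ) : bideg i j + bideg i' j' = bideg (i + i') (j + j') := by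
  ext x; fin_cases x <;> simp

theorem bideg_le_bideg {i j i' j' : ℕ} : bideg i j ≤ bideg i' j' ↔ i ≤ i' ∧ j ≤ j' := by
  simp [Finsupp.le_def, Fin.forall_fin_two]

theorem X_zero_mul_X_one_eq_monomial :
    (X 0 * X 1 : MvPowerSeries (Fin 2) A) = monomial (bideg 1 1) 1 := by
  rw [X, X, monomial_mul_monomial, one_mul]; rfl

theorem X_zero_eq_monomial : (X 0 : MvPowerSeries (Fin 2) A) = monomial (bideg 1 0) 1 := by
  simp [X_def, bideg]

def xyIdeal (t : A) : Ideal (MvPowerSeries (Fin 2) A) := Ideal.span {X 0 * X 1 - C t}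

theorem coeff_succ_xy_sub_C_mul (t : A) (q : MvPowerSeries (Fin 2) A) (i j : ℕ) :
    coeff (bideg (i + 1) (j + 1)) ((X 0 * X 1 - C t) * q)
      = coeff (bideg i j) q - t * coeff (bideg (i + 1) (j + 1)) q := by
  rw [sub_mul, map_sub, X_zero_mul_X_one_eq_monomial, add_comm i, add_comm j, ← bideg_add,
    coeff_add_monomial_mul, one_mul, coeff_C_mul]

theorem coeff_xy_sub_C_mul_of_eq_zero (t : A) (q : MvPowerSeries (Fin 2) A) {i j : ℕ}
    (hij : i = 0 ∨ j = 0) :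
    coeff (bideg i j) ((X 0 * X 1 - C t) * q) = -(t * coeff (bideg i j) q) := by
  rw [sub_mul, map_sub, X_zero_mul_X_one_eq_monomial, coeff_monomial_mul, coeff_C_mul,
    if_neg (by rw [bideg_le_bideg]; omega), zero_sub]

theorem coeff_succ_mul_X_zero (F : MvPowerSeries (Fin 2) A) (i j : ℕ) :
    coeff (bideg (i + 1) j) (F * X 0) = coeff (bideg i j) F := by
  rw [X_zero_eq_monomial, show bideg (i + 1) j = bideg i j + bideg 1 0 by rw [bideg_add, add_zero],
    coeff_add_mul_monomial, mul_one]

theorem coeff_zero_mul_X_zero (F : MvPowerSeries (Fin 2) A) (j : ℕ) :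
    coeff (bideg 0 j) (F * X 0) = 0 := by
  rw [X_zero_eq_monomial, coeff_mul_monomial, if_neg (by rw [bideg_le_bideg]; omega)]

theorem coeff_bideg_C_of_ne_zero (c : A) {i j : ℕ} (hj : j ≠ 0) :
    coeff (bideg i j) (C c : MvPowerSeries (Fin 2) A) = 0 := by
  classical
  rw [coeff_C, if_neg]
  intro h
  exact hj (by simpa using congrArg (· 1) h)

def swapXY : MvPowerSeries (Fin 2) A ≃ₐ[A] MvPowerSeries (Fin 2) A :=
  renameEquiv A (Equiv.swap 0 1)

theorem coeff_swapXY (F : MvPowerSeries (Fin 2) A) (i j : ℕ) :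
    coeff (bideg i j) (swapXY F) = coeff (bideg j i) F := by
  have : Finsupp.embDomain (Equiv.swap (0 : Fin 2) 1).toEmbedding (bideg j i) = bideg i j := by
    simp [bideg, Finsupp.embDomain_single, Finsupp.embDomain_add, add_comm]
  rw [← this]
  exact coeff_embDomain_rename _ F _

@[simp] theorem swapXY_X_zero : swapXY (X 0 : MvPowerSeries (Fin 2) A) = X 1 := by
  simp [swapXY]

@[simp] theorem swapXY_X_one : swapXY (X 1 : MvPowerSeries (Fin 2) A) = X 0 := by
  simp [swapXY]

@[simp] theorem swapXY_C (c : A) : swapXY (C c : MvPowerSeries (Fin 2) A) = C c := by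
  simp [swapXY]

theorem swapXY_xy_sub_C (t : A) :
    swapXY (X 0 * X 1 - C t : MvPowerSeries (Fin 2) A) = X 0 * X 1 - C t := by
  simp [swapXY, mul_comm]

theorem swapXY_mem_xyIdeal_iff {t : A} {F : MvPowerSeries (Fin 2) A} :
    swapXY F ∈ xyIdeal t ↔ F ∈ xyIdeal t := by
  rw [xyIdeal, Ideal.mem_span_singleton, Ideal.mem_span_singleton, ← swapXY_xy_sub_C,
    map_dvd_iff, swapXY_xy_sub_C]

theorem swapXY_swapXY (F : MvPowerSeries (Fin 2) A) : swapXY (swapXY F) = F := by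
  simp [swapXY, ← Equiv.coe_trans]

section DiagSum

variable {𝔞 : Ideal A} [IsAdicComplete 𝔞 A] {t : A} (ht : t ∈ 𝔞)

/-- For `i = 0` resp. `j = 0` these are the normal form coefficients `βⱼ` resp. `αᵢ`. -/
def diagSum (i j : ℕ) : MvPowerSeries (Fin 2) A →ₗ[A] A :=
  adicSum ht ∘ₗ LinearMap.pi fun k => coeff (bideg (i + k) (j + k))

theorem diagSum_apply (i j : ℕ) (F : MvPowerSeries (Fin 2) A) :
    diagSum ht i j F = adicSum ht fun k => coeff (bideg (i + k) (j + k)) F := rfl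

theorem diagSum_eq_coeff_add_mul (i j : ℕ) (F : MvPowerSeries (Fin 2) A) :
    diagSum ht i j F = coeff (bideg i j) F + t * diagSum ht (i + 1) (j + 1) F := by
  rw [diagSum_apply, adicSum_eq_zero_add_mul, diagSum_apply]
  simp only [add_zero, add_assoc, add_comm 1]

theorem diagSum_succ_xy_sub_C_mul (q : MvPowerSeries (Fin 2) A) (i j : ℕ) :
    diagSum ht (i + 1) (j + 1) ((X 0 * X 1 - C t) * q) = coeff (bideg i j) q := by
  have h : (fun k => coeff (bideg (i + 1 + k) (j + 1 + k)) ((X 0 * X 1 - C t) * q))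
      = (fun k => coeff (bideg (i + k) (j + k)) q)
        - t • fun k => coeff (bideg (i + 1 + k) (j + 1 + k)) q := by
    ext k
    rw [Pi.sub_apply, Pi.smul_apply, smul_eq_mul, add_right_comm i 1 k, add_right_comm j 1 k,
      coeff_succ_xy_sub_C_mul]
  rw [diagSum_apply, h, map_sub, map_smul, ← diagSum_apply, ← diagSum_apply,
    diagSum_eq_coeff_add_mul ht i j, smul_eq_mul, add_sub_cancel_right]

theorem diagSum_xy_sub_C_mul_of_eq_zero (q : MvPowerSeries (Fin 2) A) {i j : ℕ}
    (hij : i = 0 ∨ j = 0) : diagSum ht i j ((X 0 * X 1 - C t) * q) = 0 := by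
  rw [diagSum_eq_coeff_add_mul, coeff_xy_sub_C_mul_of_eq_zero t q hij,
    diagSum_succ_xy_sub_C_mul, neg_add_cancel]

theorem mem_xyIdeal_iff {F : MvPowerSeries (Fin 2) A} :
    F ∈ xyIdeal t ↔ ∀ i j, (i = 0 ∨ j = 0) → diagSum ht i j F = 0 := by
  refine ⟨fun hF i j hij => ?_, fun hF => Ideal.mem_span_singleton.2 ?_⟩
  · obtain ⟨q, rfl⟩ := Ideal.mem_span_singleton.1 hF
    exact diagSum_xy_sub_C_mul_of_eq_zero ht q hij
  · let Q : MvPowerSeries (Fin 2) A := fun d => diagSum ht (d 0 + 1) (d 1 + 1) F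
    have hQ (i j : ℕ) : coeff (bideg i j) Q = diagSum ht (i + 1) (j + 1) F := by
      change diagSum ht (bideg i j 0 + 1) (bideg i j 1 + 1) F = _
      simp
    suffices h : ∀ i j, coeff (bideg i j) F = coeff (bideg i j) ((X 0 * X 1 - C t) * Q) from
      ⟨Q, ext fun d => by rw [eq_bideg d]; exact h _ _⟩
    intro i j
    by_cases hij : i = 0 ∨ j = 0
    · rw [coeff_xy_sub_C_mul_of_eq_zero t Q hij, hQ, eq_neg_iff_add_eq_zero,
        ← diagSum_eq_coeff_add_mul, hF i j hij]
    · obtain ⟨i, rfl⟩ := Nat.exists_eq_succ_of_ne_zero (not_or.1 hij).1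
      obtain ⟨j, rfl⟩ := Nat.exists_eq_succ_of_ne_zero (not_or.1 hij).2
      rw [coeff_succ_xy_sub_C_mul, hQ, hQ, diagSum_eq_coeff_add_mul ht (i + 1) (j + 1),
        add_sub_cancel_right]

theorem diagSum_succ_mul_X_zero (i j : ℕ) (F : MvPowerSeries (Fin 2) A) :
    diagSum ht (i + 1) j (F * X 0) = diagSum ht i j F := by
  simp only [diagSum_apply, add_right_comm i 1, coeff_succ_mul_X_zero]

theorem diagSum_zero_mul_X_zero (j : ℕ) (F : MvPowerSeries (Fin 2) A) :
    diagSum ht 0 j (F * X 0) = t * diagSum ht 0 (j + 1) F := by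
  rw [diagSum_eq_coeff_add_mul, coeff_zero_mul_X_zero, diagSum_succ_mul_X_zero, zero_add]

theorem diagSum_add_mul_X_zero_pow (i j l : ℕ) (F : MvPowerSeries (Fin 2) A) :
    diagSum ht (i + l) j (F * X 0 ^ l) = diagSum ht i j F := by
  induction l with
  | zero => simp
  | succ l ih => rw [pow_succ, ← mul_assoc, ← add_assoc, diagSum_succ_mul_X_zero, ih]

theorem diagSum_zero_mul_X_zero_pow (j l : ℕ) (F : MvPowerSeries (Fin 2) A) :
    diagSum ht 0 j (F * X 0 ^ l) = t ^ l * diagSum ht 0 (j + l) F := by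
  induction l generalizing j with
  | zero => simp
  | succ l ih =>
    rw [pow_succ, ← mul_assoc, diagSum_zero_mul_X_zero, ih, add_right_comm, add_assoc]
    ring

theorem diagSum_of_mul_X_zero_pow_mem {F : MvPowerSeries (Fin 2) A} {l : ℕ}
    (hF : F * X 0 ^ l ∈ xyIdeal t) :
    (∀ i, diagSum ht i 0 F = 0) ∧ ∀ j, t ^ j * diagSum ht 0 j F = 0 := by
  have hbd := (mem_xyIdeal_iff ht).1 hF
  refine ⟨fun i => ?_, fun j => ?_⟩
  · rw [← diagSum_add_mul_X_zero_pow ht i 0 l]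
    exact hbd _ _ (Or.inr rfl)
  · -- `tʲ βⱼ(F)` is `β₀(F Xʲ)`, a multiple of `β₀(F Xˡ)` if `l ≤ j` and equal to
    -- `α_{l-j}(F Xˡ)` if `j ≤ l`.
    have h := diagSum_zero_mul_X_zero_pow ht 0 j F
    rw [zero_add] at h
    rw [← h]
    rcases le_total l j with hlj | hjl
    · refine (mem_xyIdeal_iff ht).1 ?_ 0 0 (Or.inl rfl)
      rw [← Nat.add_sub_cancel' hlj, pow_add, ← mul_assoc]
      exact Ideal.mul_mem_right _ _ hF
    · rw [← diagSum_add_mul_X_zero_pow ht 0 0 (l - j), mul_assoc, ← pow_add,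
        Nat.add_sub_cancel' hjl]
      exact hbd _ _ (Or.inr rfl)

theorem diagSum_swapXY (i j : ℕ) (F : MvPowerSeries (Fin 2) A) :
    diagSum ht i j (swapXY F) = diagSum ht j i F := by
  simp only [diagSum_apply, coeff_swapXY]

theorem diagSum_of_mul_X_one_pow_mem {F : MvPowerSeries (Fin 2) A} {l : ℕ}
    (hF : F * X 1 ^ l ∈ xyIdeal t) :
    (∀ j, diagSum ht 0 j F = 0) ∧ ∀ i, t ^ i * diagSum ht i 0 F = 0 := by
  simpa only [diagSum_swapXY] using diagSum_of_mul_X_zero_pow_mem ht (F := swapXY F) (l := l)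
    (by rwa [← swapXY_X_one, ← map_pow, ← map_mul, swapXY_mem_xyIdeal_iff])

def seriesY (g : ℕ → A) : MvPowerSeries (Fin 2) A := fun d => if d 0 = 0 then g (d 1) else 0

theorem coeff_seriesY (g : ℕ → A) (i j : ℕ) :
    coeff (bideg i j) (seriesY g) = if i = 0 then g j else 0 := by
  change (if bideg i j 0 = 0 then g (bideg i j 1) else 0) = _
  simp

theorem coeff_seriesY_mul_swapXY_seriesY (g h : ℕ → A) (i j : ℕ) :
    coeff (bideg i j) (seriesY g * swapXY (seriesY h)) = g j * h i := by
  rw [coeff_mul, Finset.sum_eq_single (bideg 0 j, bideg i 0)]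
  · simp [coeff_seriesY, coeff_swapXY]
  · rintro ⟨p, q⟩ hpq hne
    rw [Finset.HasAntidiagonal.mem_antidiagonal] at hpq
    have h0 : p 0 + q 0 = i := by simpa using congrArg (· 0) hpq
    have h1 : p 1 + q 1 = j := by simpa using congrArg (· 1) hpq
    rw [eq_bideg p, eq_bideg q, coeff_seriesY, coeff_swapXY, coeff_seriesY]
    split_ifs with hp hq
    · refine absurd ?_ hne
      rw [eq_bideg p, eq_bideg q, hp, hq]
      congr <;> omega
    all_goals simp
  · simp [bideg_add]

theorem diagSum_seriesY (g : ℕ → A) (i j : ℕ) :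
    diagSum ht i j (seriesY g) = if i = 0 then g j else 0 := by
  have hzero : diagSum ht (i + 1) (j + 1) (seriesY g) = 0 := by
    simp only [diagSum_apply, coeff_seriesY, Nat.add_eq_zero_iff, one_ne_zero, and_false]
    exact map_zero _
  rw [diagSum_eq_coeff_add_mul, hzero, mul_zero, add_zero, coeff_seriesY]

theorem sub_seriesY_diagSum_mem_xyIdeal {F : MvPowerSeries (Fin 2) A}
    (hF : ∀ i, diagSum ht i 0 F = 0) :
    F - seriesY (fun j => diagSum ht 0 j F) ∈ xyIdeal t := by
  refine (mem_xyIdeal_iff ht).2 fun i j hij => ?_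
  rw [map_sub, diagSum_seriesY, sub_eq_zero]
  rcases hij with rfl | rfl
  · rw [if_pos rfl]
  · split_ifs with hi
    · rw [hi]
    · exact hF i

theorem diagSum_zero_seriesY_mul_swapXY_seriesY (g : ℕ → A) {h : ℕ → A}
    (hh : ∀ i, t ^ i * h i = 0) (j : ℕ) :
    diagSum ht 0 j (seriesY g * swapXY (seriesY h)) = 0 := by
  rw [diagSum_apply]
  refine adicSum_eq_zero_of_forall_pow_mul_eq_zero ht fun k => ?_
  rw [zero_add, coeff_seriesY_mul_swapXY_seriesY, mul_left_comm, hh, mul_zero]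

theorem diagSum_zero_succ_C (j : ℕ) (c : A) : diagSum ht 0 (j + 1) (C c) = 0 := by
  simp only [diagSum_apply, add_right_comm j 1, coeff_bideg_C_of_ne_zero _ (Nat.succ_ne_zero _)]
  exact map_zero _

end DiagSum

theorem sub_one_mem_xyIdeal_left {𝔞 : Ideal A} [IsAdicComplete 𝔞 A] {t : A}
    (ht : t ∈ 𝔞) {x y : MvPowerSeries (Fin 2) A} {l : ℕ} {w : A}
    (hx : (x - 1) * X 0 ^ l ∈ xyIdeal t) (hy : (y - 1) * X 1 ^ l ∈ xyIdeal t)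
    (hxy : x * y - C w ∈ xyIdeal t) : x - 1 ∈ xyIdeal t := by
  obtain ⟨hx0, -⟩ := diagSum_of_mul_X_zero_pow_mem ht hx
  obtain ⟨hy0, hh⟩ := diagSum_of_mul_X_one_pow_mem ht hy
  set g := fun j => diagSum ht 0 j (x - 1)
  set h := fun i => diagSum ht i 0 (y - 1)
  have hxg : x - 1 - seriesY g ∈ xyIdeal t := sub_seriesY_diagSum_mem_xyIdeal ht hx0
  have hyh : y - 1 - swapXY (seriesY h) ∈ xyIdeal t := by
    rw [← swapXY_mem_xyIdeal_iff, map_sub, swapXY_swapXY]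
    simpa only [diagSum_swapXY] using
      sub_seriesY_diagSum_mem_xyIdeal ht (F := swapXY (y - 1))
        (by simpa only [diagSum_swapXY] using hy0)
  have key : seriesY g + swapXY (seriesY h) + seriesY g * swapXY (seriesY h) + C (1 - w)
      ∈ xyIdeal t := by
    have e : seriesY g + swapXY (seriesY h) + seriesY g * swapXY (seriesY h) + C (1 - w)
        = (x * y - C w) - (x - 1 - seriesY g) * y
          - (1 + seriesY g) * (y - 1 - swapXY (seriesY h)) := by
      rw [map_sub, map_one]; ring
    rw [e]
    exact sub_mem (sub_mem hxy (Ideal.mul_mem_right _ _ hxg)) (Ideal.mul_mem_left _ _ hyh)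
  have hg : ∀ j, g j = 0 := by
    rintro (_ | j)
    · exact hx0 0
    · have := (mem_xyIdeal_iff ht).1 key 0 (j + 1) (Or.inl rfl)
      rwa [map_add, map_add, map_add, diagSum_seriesY, diagSum_swapXY, diagSum_seriesY,
        diagSum_zero_seriesY_mul_swapXY_seriesY ht g hh, diagSum_zero_succ_C, if_pos rfl,
        if_neg j.succ_ne_zero, add_zero, add_zero, add_zero] at this
  refine (mem_xyIdeal_iff ht).2 fun i j hij => ?_
  rcases hij with rfl | rfl
  · exact hg j
  · exact hx0 i

theorem sub_one_mem_xyIdeal_right {𝔞 : Ideal A} [IsAdicComplete 𝔞 A] {t : A}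
    (ht : t ∈ 𝔞) {x y : MvPowerSeries (Fin 2) A} {l : ℕ} {w : A}
    (hx : (x - 1) * X 0 ^ l ∈ xyIdeal t) (hy : (y - 1) * X 1 ^ l ∈ xyIdeal t)
    (hxy : x * y - C w ∈ xyIdeal t) : y - 1 ∈ xyIdeal t := by
  rw [← swapXY_mem_xyIdeal_iff] at hx hy hxy ⊢
  simp only [map_mul, map_sub, map_one, map_pow, swapXY_X_zero, swapXY_X_one, swapXY_C]
    at hx hy hxy ⊢
  exact sub_one_mem_xyIdeal_left ht hy hx (by rwa [mul_comm])

end XYQuotient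

theorem stmt3_general {A : Type*} [CommRing A] [IsLocalRing A]
    [IsAdicComplete (IsLocalRing.maximalIdeal A) A]
    (t : A) (ht : t ∈ IsLocalRing.maximalIdeal A)
    (I : Ideal (MvPowerSeries (Fin 2) A))
    (hI : I = Ideal.span {MvPowerSeries.X (0 : Fin 2) * MvPowerSeries.X (1 : Fin 2) -
      (MvPowerSeries.C : A →+* MvPowerSeries (Fin 2) A) t})
    (φ : A →+* MvPowerSeries (Fin 2) A ⧸ I)
    (hφ : φ = (Ideal.Quotient.mk I).comp ((MvPowerSeries.C : A →+* MvPowerSeries (Fin 2) A)))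
    (u v : MvPowerSeries (Fin 2) A ⧸ I)
    (hu : u = Ideal.Quotient.mk I (MvPowerSeries.X (0 : Fin 2)))
    (hv : v = Ideal.Quotient.mk I (MvPowerSeries.X (1 : Fin 2)))
    (l : ℕ)
    (a b : (MvPowerSeries (Fin 2) A ⧸ I)ˣ)
    (ha : (a : MvPowerSeries (Fin 2) A ⧸ I) * u ^ l = u ^ l)
    (hb : (b : MvPowerSeries (Fin 2) A ⧸ I) * v ^ l = v ^ l)
    (hab : ∃ w : Aˣ, (a : MvPowerSeries (Fin 2) A ⧸ I) * b = φ (w : A)) :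
    (a : MvPowerSeries (Fin 2) A ⧸ I) = 1 ∧ (b : MvPowerSeries (Fin 2) A ⧸ I) = 1 := by
  obtain rfl : I = xyIdeal t := hI
  subst hφ hu hv
  obtain ⟨w, hw⟩ := hab
  obtain ⟨x, hx⟩ := Ideal.Quotient.mk_surjective (a : MvPowerSeries (Fin 2) A ⧸ xyIdeal t)
  obtain ⟨y, hy⟩ := Ideal.Quotient.mk_surjective (b : MvPowerSeries (Fin 2) A ⧸ xyIdeal t)
  rw [← hx] at ha hw ⊢
  rw [← hy] at hb hw ⊢
  simp only [← map_pow, ← map_mul, RingHom.comp_apply, Ideal.Quotient.eq, ← sub_one_mul]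
    at ha hb hw
  rw [← map_one (Ideal.Quotient.mk _), Ideal.Quotient.eq, Ideal.Quotient.eq]
  exact ⟨sub_one_mem_xyIdeal_left ht ha hb hw, sub_one_mem_xyIdeal_right ht ha hb hw⟩

/-- **Lemma 3.3(2), completed version.**  Let `A` be a complete noetherian local ring,
`t ∈ m_A`, and `R = A⟦X,Y⟧/(XY − t)`, with `u, v` the images of `X, Y`.  If `l ≥ 1`
and `a, b ∈ Rˣ` satisfy `a·u^l = u^l`, `b·v^l = v^l`, and `a·b` is the image of a
unit of `A`, then `a = b = 1`. -/
theorem stmt3 {A : Type*} [CommRing A] [IsNoetherianRing A] [IsLocalRing A]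
    [IsAdicComplete (IsLocalRing.maximalIdeal A) A]
    (t : A) (ht : t ∈ IsLocalRing.maximalIdeal A)
    (I : Ideal (MvPowerSeries (Fin 2) A))
    (hI : I = Ideal.span {MvPowerSeries.X (0 : Fin 2) * MvPowerSeries.X (1 : Fin 2) -
      (MvPowerSeries.C : A →+* MvPowerSeries (Fin 2) A) t})
    (φ : A →+* MvPowerSeries (Fin 2) A ⧸ I)
    (hφ : φ = (Ideal.Quotient.mk I).comp ((MvPowerSeries.C : A →+* MvPowerSeries (Fin 2) A)))
    (u v : MvPowerSeries (Fin 2) A ⧸ I)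
    (hu : u = Ideal.Quotient.mk I (MvPowerSeries.X (0 : Fin 2)))
    (hv : v = Ideal.Quotient.mk I (MvPowerSeries.X (1 : Fin 2)))
    (l : ℕ) (hl : 1 ≤ l)
    (a b : (MvPowerSeries (Fin 2) A ⧸ I)ˣ)
    (ha : (a : MvPowerSeries (Fin 2) A ⧸ I) * u ^ l = u ^ l)
    (hb : (b : MvPowerSeries (Fin 2) A ⧸ I) * v ^ l = v ^ l)
    (hab : ∃ w : Aˣ, (a : MvPowerSeries (Fin 2) A ⧸ I) * b = φ (w : A)) :
    (a : MvPowerSeries (Fin 2) A ⧸ I) = 1 ∧ (b : MvPowerSeries (Fin 2) A ⧸ I) = 1 :=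
  stmt3_general t ht I hI φ hφ u v hu hv l a b ha hb hab
end
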